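/- For the NHEG metric, the null vector field ℓ = ((1/r²), 1, 0, −k/r) is geodesic and affinely parameterized: ℓ^ν ∇_ν ℓ^μ = 0 for all μ, where ∇ is the Levi-Civita connection of g. -/

import Mathlib

noncomputable section

/-- Points of ℝ⁴ in coordinates (t, r, θ, φ) = (p 0, p 1, p 2, p 3). -/
abbrev Pt4 := Fin 4 → ℝ

/-- Partial derivative of a scalar function in the μ-th coordinate direction. -/
noncomputable def pd (f : Pt4 → ℝ) (μ : Fin 4) (p : Pt4) : ℝ :=
  fderiv ℝ f p (Pi.single μ 1)

/-- Christoffel symbols Γ^ρ_{μν} = ½ g^{ρσ}(∂_μ g_{σν} + ∂_ν g_{σμ} − ∂_σ g_{μν})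
of the Levi-Civita connection of a metric g. -/
noncomputable def christoffel (g : Pt4 → Matrix (Fin 4) (Fin 4) ℝ)
    (ρ μ ν : Fin 4) (p : Pt4) : ℝ :=
  (1 / 2) * ∑ σ, (g p)⁻¹ ρ σ *
    (pd (fun q => g q σ ν) μ p + pd (fun q => g q σ μ) ν p - pd (fun q => g q μ ν) σ p)

/-- The NHEG metric: g_tt = Γ r²(γ k² − 1), g_rr = Γ/r², g_θθ = Γ, g_φφ = Γγ,
g_tφ = g_φt = Γγ k r, all other components zero. -/
noncomputable def nhegMetric (G γ : ℝ → ℝ) (k : ℝ) : Pt4 → Matrix (Fin 4) (Fin 4) ℝ :=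
  fun p =>
    !![G (p 2) * (p 1) ^ 2 * (γ (p 2) * k ^ 2 - 1), 0, 0, G (p 2) * γ (p 2) * k * p 1;
       0, G (p 2) / (p 1) ^ 2, 0, 0;
       0, 0, G (p 2), 0;
       G (p 2) * γ (p 2) * k * p 1, 0, 0, G (p 2) * γ (p 2)]

/-- The null vector field ℓ = (1/r², 1, 0, −k/r). -/
noncomputable def ellField (k : ℝ) : Pt4 → Fin 4 → ℝ :=
  fun p => ![1 / (p 1) ^ 2, 1, 0, -(k / p 1)]

lemma hasFDerivAt_coord (i : Fin 4) (p : Pt4) :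
    HasFDerivAt (fun q : Pt4 => q i) (ContinuousLinearMap.proj i : Pt4 →L[ℝ] ℝ) p := by
  exact (ContinuousLinearMap.proj i : Pt4 →L[ℝ] ℝ).hasFDerivAt

lemma pd_const (c : ℝ) (μ : Fin 4) (p : Pt4) : pd (fun _ => c) μ p = 0 := by simp [pd]

lemma pd_master (p : Pt4) (A B : ℝ → ℝ) (a b : ℝ) (hA : HasDerivAt A a (p 2))
    (hB : HasDerivAt B b (p 1)) (μ : Fin 4) :
    pd (fun q => A (q 2) * B (q 1)) μ p =
      a * B (p 1) * (if μ = 2 then 1 else 0)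
        + A (p 2) * b * (if μ = 1 then 1 else 0) := by
  have hA' : HasFDerivAt (fun q : Pt4 => A (q 2))
      (a • (ContinuousLinearMap.proj 2 : Pt4 →L[ℝ] ℝ)) p :=
    hA.comp_hasFDerivAt p (hasFDerivAt_coord 2 p)
  have hB' : HasFDerivAt (fun q : Pt4 => B (q 1))
      (b • (ContinuousLinearMap.proj 1 : Pt4 →L[ℝ] ℝ)) p :=
    hB.comp_hasFDerivAt p (hasFDerivAt_coord 1 p)
  have h : HasFDerivAt (fun q : Pt4 => A (q 2) * B (q 1)) _ p := hA'.mul hB'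
  rw [pd, h.fderiv]
  fin_cases μ <;> simp [Pi.single_apply] <;> ring

lemma pd_B (p : Pt4) (B : ℝ → ℝ) (b : ℝ) (hB : HasDerivAt B b (p 1)) (μ : Fin 4) :
    pd (fun q => B (q 1)) μ p = b * (if μ = 1 then 1 else 0) := by
  have hB' : HasFDerivAt (fun q : Pt4 => B (q 1))
      (b • (ContinuousLinearMap.proj 1 : Pt4 →L[ℝ] ℝ)) p :=
    hB.comp_hasFDerivAt p (hasFDerivAt_coord 1 p)
  rw [pd, hB'.fderiv]
  fin_cases μ <;> simp [Pi.single_apply]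

lemma pd_nheg (G γ : ℝ → ℝ) (hG : ContDiff ℝ (⊤ : ℕ∞) G) (hγ : ContDiff ℝ (⊤ : ℕ∞) γ) (k : ℝ)
    (p : Pt4) (hr : p 1 ≠ 0) (σ ν μ : Fin 4) :
    pd (fun q => nhegMetric G γ k q σ ν) μ p =
      (!![(deriv G (p 2) * (γ (p 2) * k^2 - 1) + G (p 2) * (deriv γ (p 2) * k^2)) * (p 1)^2, 0, 0,
          (deriv G (p 2) * γ (p 2) + G (p 2) * deriv γ (p 2)) * (k * p 1);
          0, deriv G (p 2) / (p 1)^2, 0, 0;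
          0, 0, deriv G (p 2), 0;
          (deriv G (p 2) * γ (p 2) + G (p 2) * deriv γ (p 2)) * (k * p 1), 0, 0,
          deriv G (p 2) * γ (p 2) + G (p 2) * deriv γ (p 2)] σ ν) * (if μ = 2 then 1 else 0)
      + (!![2 * G (p 2) * p 1 * (γ (p 2) * k^2 - 1), 0, 0, G (p 2) * γ (p 2) * k;
          0, -(2 * G (p 2) / (p 1)^3), 0, 0;
          0, 0, 0, 0;
          G (p 2) * γ (p 2) * k, 0, 0, 0] σ ν) * (if μ = 1 then 1 else 0) := by
  have hGd : HasDerivAt G (deriv G (p 2)) (p 2) :=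
    ((hG.differentiable (by simp)) (p 2)).hasDerivAt
  have hγd : HasDerivAt γ (deriv γ (p 2)) (p 2) :=
    ((hγ.differentiable (by simp)) (p 2)).hasDerivAt
  have hGγ : HasDerivAt (fun θ => G θ * γ θ)
      (deriv G (p 2) * γ (p 2) + G (p 2) * deriv γ (p 2)) (p 2) := hGd.mul hγd
  have hkr : HasDerivAt (fun r : ℝ => k * r) k (p 1) := by
    simpa using (hasDerivAt_id (p 1)).const_mul k
  have hpow : HasDerivAt (fun r : ℝ => r ^ 2) (2 * p 1) (p 1) := by
    simpa using hasDerivAt_pow 2 (p 1)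
  fin_cases σ <;> fin_cases ν <;>
    simp only [Fin.zero_eta, Fin.mk_one, Fin.reduceFinMk]
  · rw [show (fun q => nhegMetric G γ k q 0 0)
        = fun q : Pt4 => (fun θ => G θ * (γ θ * k ^ 2 - 1)) (q 2) * (fun r : ℝ => r ^ 2) (q 1)
        from funext fun q => by simp [nhegMetric, Matrix.vecHead, Matrix.vecTail]; ring,
      pd_master p (fun θ => G θ * (γ θ * k ^ 2 - 1)) (fun r : ℝ => r ^ 2) _ _ (hGd.mul ((hγd.mul_const _).sub_const 1)) hpow]
    fin_cases μ <;> simp [Matrix.vecHead, Matrix.vecTail] <;> (try field_simp) <;> ring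
  · rw [show (fun q => nhegMetric G γ k q 0 1) = fun _ : Pt4 => (0:ℝ)
        from funext fun q => by simp [nhegMetric, Matrix.vecHead, Matrix.vecTail], pd_const]
    simp [Matrix.vecHead, Matrix.vecTail]
  · rw [show (fun q => nhegMetric G γ k q 0 2) = fun _ : Pt4 => (0:ℝ)
        from funext fun q => by simp [nhegMetric, Matrix.vecHead, Matrix.vecTail], pd_const]
    simp [Matrix.vecHead, Matrix.vecTail]
  · rw [show (fun q => nhegMetric G γ k q 0 3)
        = fun q : Pt4 => (fun θ => G θ * γ θ) (q 2) * (fun r : ℝ => k * r) (q 1)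
        from funext fun q => by simp [nhegMetric, Matrix.vecHead, Matrix.vecTail]; ring,
      pd_master p _ _ _ _ hGγ hkr]
    fin_cases μ <;> simp [Matrix.vecHead, Matrix.vecTail] <;> (try field_simp) <;> ring
  · rw [show (fun q => nhegMetric G γ k q 1 0) = fun _ : Pt4 => (0:ℝ)
        from funext fun q => by simp [nhegMetric, Matrix.vecHead, Matrix.vecTail], pd_const]
    simp [Matrix.vecHead, Matrix.vecTail]
  · rw [show (fun q => nhegMetric G γ k q 1 1)
        = fun q : Pt4 => G (q 2) * (fun r : ℝ => (r ^ 2)⁻¹) (q 1)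
        from funext fun q => by simp [nhegMetric, Matrix.vecHead, Matrix.vecTail]; rw [div_eq_mul_inv],
      pd_master p G (fun r : ℝ => (r ^ 2)⁻¹) _ _ hGd (hpow.inv (pow_ne_zero 2 hr))]
    fin_cases μ <;> simp [Matrix.vecHead, Matrix.vecTail] <;> (try field_simp) <;> ring
  · rw [show (fun q => nhegMetric G γ k q 1 2) = fun _ : Pt4 => (0:ℝ)
        from funext fun q => by simp [nhegMetric, Matrix.vecHead, Matrix.vecTail], pd_const]
    simp [Matrix.vecHead, Matrix.vecTail]
  · rw [show (fun q => nhegMetric G γ k q 1 3) = fun _ : Pt4 => (0:ℝ)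
        from funext fun q => by simp [nhegMetric, Matrix.vecHead, Matrix.vecTail], pd_const]
    simp [Matrix.vecHead, Matrix.vecTail]
  · rw [show (fun q => nhegMetric G γ k q 2 0) = fun _ : Pt4 => (0:ℝ)
        from funext fun q => by simp [nhegMetric, Matrix.vecHead, Matrix.vecTail], pd_const]
    simp [Matrix.vecHead, Matrix.vecTail]
  · rw [show (fun q => nhegMetric G γ k q 2 1) = fun _ : Pt4 => (0:ℝ)
        from funext fun q => by simp [nhegMetric, Matrix.vecHead, Matrix.vecTail], pd_const]
    simp [Matrix.vecHead, Matrix.vecTail]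
  · rw [show (fun q => nhegMetric G γ k q 2 2)
        = fun q : Pt4 => G (q 2) * (fun _ : ℝ => (1:ℝ)) (q 1)
        from funext fun q => by simp [nhegMetric, Matrix.vecHead, Matrix.vecTail],
      pd_master p _ _ _ _ hGd (hasDerivAt_const (p 1) 1)]
    fin_cases μ <;> simp [Matrix.vecHead, Matrix.vecTail] <;> (try field_simp) <;> (try ring)
  · rw [show (fun q => nhegMetric G γ k q 2 3) = fun _ : Pt4 => (0:ℝ)
        from funext fun q => by simp [nhegMetric, Matrix.vecHead, Matrix.vecTail], pd_const]
    simp [Matrix.vecHead, Matrix.vecTail]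
  · rw [show (fun q => nhegMetric G γ k q 3 0)
        = fun q : Pt4 => (fun θ => G θ * γ θ) (q 2) * (fun r : ℝ => k * r) (q 1)
        from funext fun q => by simp [nhegMetric, Matrix.vecHead, Matrix.vecTail]; ring,
      pd_master p _ _ _ _ hGγ hkr]
    fin_cases μ <;> simp [Matrix.vecHead, Matrix.vecTail] <;> (try field_simp) <;> ring
  · rw [show (fun q => nhegMetric G γ k q 3 1) = fun _ : Pt4 => (0:ℝ)
        from funext fun q => by simp [nhegMetric, Matrix.vecHead, Matrix.vecTail], pd_const]
    simp [Matrix.vecHead, Matrix.vecTail]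
  · rw [show (fun q => nhegMetric G γ k q 3 2) = fun _ : Pt4 => (0:ℝ)
        from funext fun q => by simp [nhegMetric, Matrix.vecHead, Matrix.vecTail], pd_const]
    simp [Matrix.vecHead, Matrix.vecTail]
  · rw [show (fun q => nhegMetric G γ k q 3 3)
        = fun q : Pt4 => (fun θ => G θ * γ θ) (q 2) * (fun _ : ℝ => (1:ℝ)) (q 1)
        from funext fun q => by simp [nhegMetric, Matrix.vecHead, Matrix.vecTail],
      pd_master p _ _ _ _ hGγ (hasDerivAt_const (p 1) 1)]
    fin_cases μ <;> simp [Matrix.vecHead, Matrix.vecTail] <;> (try field_simp) <;> (try ring)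

lemma nheg_inv (G γ : ℝ → ℝ) (k : ℝ) (p : Pt4) (hr : p 1 ≠ 0)
    (hG : G (p 2) ≠ 0) (hγ : γ (p 2) ≠ 0) :
    (nhegMetric G γ k p)⁻¹ =
      !![-(1/(G (p 2) * (p 1)^2)), 0, 0, k/(G (p 2) * p 1);
         0, (p 1)^2 / G (p 2), 0, 0;
         0, 0, 1/G (p 2), 0;
         k/(G (p 2) * p 1), 0, 0, (1 - γ (p 2)*k^2)/(G (p 2) * γ (p 2))] := by
  apply Matrix.inv_eq_right_inv
  ext i j
  fin_cases i <;> fin_cases j <;>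
    (simp [nhegMetric, Matrix.mul_apply, Fin.sum_univ_four, Matrix.vecHead, Matrix.vecTail];
      try field_simp; try ring)


set_option maxHeartbeats 4000000 in
/-- ℓ is geodesic and affinely parameterized: ℓ^ν ∇_ν ℓ^μ = 0 for all μ. -/
theorem ell_geodesic_affine (G γ : ℝ → ℝ) (hG : ContDiff ℝ (⊤ : ℕ∞) G) (hγ : ContDiff ℝ (⊤ : ℕ∞) γ)
    (hGpos : ∀ θ, 0 < G θ) (hγpos : ∀ θ, 0 < γ θ) (k : ℝ)
    (p : Pt4) (hr : 0 < p 1) (μ : Fin 4) :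
    (∑ ν, ellField k p ν * pd (fun q => ellField k q μ) ν p)
      + ∑ ν, ∑ α, christoffel (nhegMetric G γ k) μ ν α p
          * ellField k p ν * ellField k p α = 0 := by
  have hr0 : p 1 ≠ 0 := hr.ne'
  have hG0 : G (p 2) ≠ 0 := (hGpos (p 2)).ne'
  have hγ0 : γ (p 2) ≠ 0 := (hγpos (p 2)).ne'
  have hpow : HasDerivAt (fun r : ℝ => r ^ 2) (2 * p 1) (p 1) := by
    simpa using hasDerivAt_pow 2 (p 1)
  have e0 : ∀ ν, pd (fun q => ellField k q 0) ν p
      = (-(2 * p 1) / ((p 1)^2)^2) * (if ν = 1 then 1 else 0) := fun ν => by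
    rw [show (fun q => ellField k q 0) = fun q : Pt4 => (fun r : ℝ => (r^2)⁻¹) (q 1)
      from funext fun q => by simp [ellField, one_div]]
    exact pd_B p _ _ (hpow.inv (pow_ne_zero 2 hr0)) ν
  have e1 : ∀ ν, pd (fun q => ellField k q 1) ν p = 0 := fun ν => by
    rw [show (fun q => ellField k q 1) = fun _ : Pt4 => (1:ℝ)
      from funext fun q => by simp [ellField], pd_const]
  have e2 : ∀ ν, pd (fun q => ellField k q 2) ν p = 0 := fun ν => by
    rw [show (fun q => ellField k q 2) = fun _ : Pt4 => (0:ℝ)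
      from funext fun q => by simp [ellField, Matrix.vecHead, Matrix.vecTail], pd_const]
  have hB3 : HasDerivAt (fun r : ℝ => -(k / r)) (k / (p 1)^2) (p 1) := by
    have h : HasDerivAt (fun r : ℝ => -(k * r⁻¹)) _ (p 1) := ((hasDerivAt_inv hr0).const_mul k).neg
    simpa [div_eq_mul_inv] using h
  have e3 : ∀ ν, pd (fun q => ellField k q 3) ν p
      = (k / (p 1)^2) * (if ν = 1 then 1 else 0) := fun ν => by
    rw [show (fun q => ellField k q 3) = fun q : Pt4 => (fun r : ℝ => -(k / r)) (q 1)
      from funext fun q => by simp [ellField, Matrix.vecHead, Matrix.vecTail]]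
    exact pd_B p _ _ hB3 ν
  have hinv := nheg_inv G γ k p hr0 hG0 hγ0
  have hd := pd_nheg G γ hG hγ k p hr0
  fin_cases μ <;>
    simp only [Fin.zero_eta, Fin.mk_one, Fin.reduceFinMk] <;>
    simp only [christoffel, Fin.sum_univ_four, hinv, hd, e0, e1, e2, e3] <;>
    simp [ellField, Matrix.vecHead, Matrix.vecTail] <;>
    field_simp <;>
    ring
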